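/- Let Σ be a finite alphabet of size q, let m∈ℕ, and let X ⊆ Σ^m. Then |W(X)| = |X|, where W(X) ⊆ {1,…,q}^m is the winning set of X. -/

import Mathlib

/-! ### Basic objects: Boolean functions, matrices, compositions -/

/-- Boolean functions on `n`-bit strings. -/
abbrev BFunc (n : ℕ) : Type := (Fin n → Bool) → Bool

/-- Boolean `m × n` matrices, viewed as tuples of rows. -/
abbrev BMat (m n : ℕ) : Type := Fin m → Fin n → Bool

/-- The column vector obtained by applying `g` to every row of `X`. -/
def gRows {m n : ℕ} (g : BFunc n) (X : BMat m n) : Fin m → Bool := fun i => g (X i)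

/-- The composition `f ⋄ g` applied to a matrix `X`. -/
def compFG {m n : ℕ} (f : BFunc m) (g : BFunc n) (X : BMat m n) : Bool := f (gRows g X)

/-- A Boolean function is non-constant. -/
def NonConst {k : ℕ} (f : BFunc k) : Prop := (∃ x, f x = true) ∧ (∃ x, f x = false)

/-- A Boolean function on `n` bits is balanced if it has exactly `2^(n-1)` ones. -/
def IsBalanced {n : ℕ} (g : BFunc n) : Prop := {x | g x = true}.ncard = 2 ^ (n - 1)

/-- The set `V₀` of balanced functions. -/
def BalancedFuncs (n : ℕ) : Set (BFunc n) := {g | IsBalanced g}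

/-- The set of matrices `X` with `g(X) = a`. -/
def ginv {m n : ℕ} (g : BFunc n) (a : Fin m → Bool) : Set (BMat m n) := {X | gRows g X = a}

/-! ### De Morgan formulas and formula complexity -/

/-- De Morgan formulas over `m` variables: leaves are literals, gates are AND/OR. -/
inductive DMF (m : ℕ) : Type where
  | lit (i : Fin m) (pos : Bool)
  | and (l r : DMF m)
  | or (l r : DMF m)

namespace DMF

/-- Size of a formula: its number of leaves. -/
def size {m : ℕ} : DMF m → ℕ
  | lit _ _ => 1
  | and l r => l.size + r.size
  | or l r => l.size + r.size

/-- Evaluation of a formula. -/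
def eval {m : ℕ} : DMF m → (Fin m → Bool) → Bool
  | lit i pos, x => if pos then x i else !(x i)
  | and l r, x => l.eval x && r.eval x
  | or l r, x => l.eval x || r.eval x

end DMF

/-- `L(f)`: the minimal size of a de Morgan formula computing `f`. -/
noncomputable def Lfun {m : ℕ} (f : BFunc m) : ℕ :=
  sInf {s | ∃ φ : DMF m, φ.size = s ∧ ∀ x, φ.eval x = f x}

/-- `L(A × B)`: the minimal size of a de Morgan formula separating `A` from `B`
(`0` if `A` or `B` is empty). -/
noncomputable def Lrect {m : ℕ} (A B : Set (Fin m → Bool)) : ℕ :=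
  open Classical in
  if A.Nonempty ∧ B.Nonempty then
    sInf {s | ∃ φ : DMF m, φ.size = s ∧
      (∀ a ∈ A, φ.eval a = true) ∧ (∀ b ∈ B, φ.eval b = false)}
  else 0

/-! ### Deterministic communication protocols -/

/-- A deterministic communication protocol tree: at each internal vertex the
indicated player sends a bit determined by her input. -/
inductive Prot (X Y O : Type) : Type where
  | leaf (o : O)
  | alice (s : X → Bool) (c : Bool → Prot X Y O)
  | bob (s : Y → Bool) (c : Bool → Prot X Y O)

namespace Prot

variable {X Y O : Type}

/-- Depth of a protocol tree. -/
def depth : Prot X Y O → ℕ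
  | leaf _ => 0
  | alice _ c => 1 + max (c false).depth (c true).depth
  | bob _ c => 1 + max (c false).depth (c true).depth

/-- Running a protocol on a pair of inputs. -/
def run : Prot X Y O → X → Y → O
  | leaf o, _, _ => o
  | alice s c, x, y => (c (s x)).run x y
  | bob s c, x, y => (c (s y)).run x y

/-- A protocol solves a relation if on every input pair it outputs a valid solution. -/
def Solves (p : Prot X Y O) (R : X → Y → O → Prop) : Prop :=
  ∀ x y, R x y (p.run x y)

/-- Alice's input `x` is consistent with the transcript `tr`. -/
def ConsA : Prot X Y O → List Bool → X → Prop
  | _, [], _ => True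
  | leaf _, _ :: _, _ => False
  | alice s c, b :: tr, x => s x = b ∧ ConsA (c b) tr x
  | bob _ c, b :: tr, x => ConsA (c b) tr x

/-- Bob's input `y` is consistent with the transcript `tr`. -/
def ConsB : Prot X Y O → List Bool → Y → Prop
  | _, [], _ => True
  | leaf _, _ :: _, _ => False
  | alice _ c, b :: tr, y => ConsB (c b) tr y
  | bob s c, b :: tr, y => s y = b ∧ ConsB (c b) tr y

/-- `tr` is a (possibly partial) transcript of `p`: each player has a consistent input. -/
def IsTranscript (p : Prot X Y O) (tr : List Bool) : Prop :=
  (∃ x, ConsA p tr x) ∧ (∃ y, ConsB p tr y)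

end Prot

/-- `C(R)`: the deterministic communication complexity of a relation. -/
noncomputable def CC {X Y O : Type} (R : X → Y → O → Prop) : ℕ :=
  sInf {d | ∃ p : Prot X Y O, p.Solves R ∧ p.depth = d}

/-! ### Karchmer–Wigderson compositions and multiplexor compositions -/

/-- The relation `KW_f ⋄ KW_g`. -/
def KWdiam {m n : ℕ} (f : BFunc m) (g : BFunc n) :
    {X : BMat m n // compFG f g X = true} → {Y : BMat m n // compFG f g Y = false} →
      Fin m × Fin n → Prop :=
  fun X Y o => X.1 o.1 o.2 ≠ Y.1 o.1 o.2

/-- The strong composition `KW_f ⊛ KW_g`. -/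
def KWstrong {m n : ℕ} (f : BFunc m) (g : BFunc n) :
    {X : BMat m n // compFG f g X = true} → {Y : BMat m n // compFG f g Y = false} →
      Fin m × Fin n → Prop :=
  fun X Y o => X.1 o.1 o.2 ≠ Y.1 o.1 o.2 ∧ g (X.1 o.1) ≠ g (Y.1 o.1)

/-- Alice's inputs in the multiplexor compositions: a function `g` and a matrix `X`
with `(f ⋄ g)(X) = 1`. -/
def AliceMux (m n : ℕ) (f : BFunc m) : Type :=
  {p : BFunc n × BMat m n // compFG f p.1 p.2 = true}

/-- Bob's inputs in the multiplexor compositions. -/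
def BobMux (m n : ℕ) (f : BFunc m) : Type :=
  {p : BFunc n × BMat m n // compFG f p.1 p.2 = false}

/-- The relation `KW_f ⋄ MUX_n` (output `none` plays the role of `⊥`). -/
def MuxDiam {m n : ℕ} (f : BFunc m) :
    AliceMux m n f → BobMux m n f → Option (Fin m × Fin n) → Prop :=
  fun x y o =>
    match o with
    | none => x.1.1 ≠ y.1.1
    | some (i, j) => x.1.2 i j ≠ y.1.2 i j

/-- The strong multiplexor composition `KW_f ⊛ MUX_n`. -/
def MuxStrong {m n : ℕ} (f : BFunc m) :
    AliceMux m n f → BobMux m n f → Option (Fin m × Fin n) → Prop :=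
  fun x y o =>
    match o with
    | none => x.1.1 ≠ y.1.1
    | some (i, j) => x.1.2 i j ≠ y.1.2 i j ∧ x.1.1 (x.1.2 i) ≠ y.1.1 (y.1.2 i)

/-- The function part of Alice's multiplexor input. -/
def muxGA {m n : ℕ} {f : BFunc m} (x : AliceMux m n f) : BFunc n := x.1.1

/-- The function part of Bob's multiplexor input. -/
def muxGB {m n : ℕ} {f : BFunc m} (y : BobMux m n f) : BFunc n := y.1.1

/-! ### Half-duplex protocols with adversary -/

/-- One player's tree in a half-duplex protocol: at each internal vertex, the
player's input determines whether she sends a bit (`some b`) or receives (`none`);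
the four children are indexed by (isSend, bit). -/
inductive HDTree (X O : Type) : Type where
  | leaf (o : O)
  | node (act : X → Option Bool) (child : Bool → Bool → HDTree X O)

namespace HDTree

variable {X O : Type}

/-- The tree is full of depth `d`: every leaf is at distance exactly `d` from the root. -/
inductive IsFull : HDTree X O → ℕ → Prop where
  | leaf (o : O) : IsFull (leaf o) 0
  | node {act : X → Option Bool} {child : Bool → Bool → HDTree X O} {d : ℕ}
      (h : ∀ s b, IsFull (child s b) d) : IsFull (node act child) (d + 1)

/-- The input `x` is consistent with the transcript `tr`: there is a vertex at
depth `|tr|` reachable on `x` along edges labeled `send(trᵢ)` or `receive(trᵢ)`. -/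
def Cons : HDTree X O → List Bool → X → Prop
  | _, [], _ => True
  | leaf _, _ :: _, _ => False
  | node act child, b :: tr, x =>
      match act x with
      | some c => c = b ∧ Cons (child true b) tr x
      | none => Cons (child false b) tr x

end HDTree

/-- One round of a half-duplex execution; `ab` are the bits delivered by the
adversary in case the round is silent. -/
def hdStep {X Y O : Type} (tA : HDTree X O) (tB : HDTree Y O) (x : X) (y : Y)
    (ab : Bool × Bool) : HDTree X O × HDTree Y O :=
  match tA, tB with
  | HDTree.node actA chA, HDTree.node actB chB =>
      ⟨match actA x with
        | some b => chA true b
        | none => chA false ((actB y).getD ab.1),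
       match actB y with
        | some b => chB true b
        | none => chB false ((actA x).getD ab.2)⟩
  | tA, tB => (tA, tB)

/-- Running a half-duplex execution for `d` rounds against the adversary `adv`. -/
def hdRun {X Y O : Type} :
    ℕ → (ℕ → Bool × Bool) → HDTree X O → HDTree Y O → X → Y → HDTree X O × HDTree Y O
  | 0, _, tA, tB, _, _ => (tA, tB)
  | d + 1, adv, tA, tB, x, y =>
      hdRun d (fun i => adv (i + 1)) (hdStep tA tB x y (adv 0)).1 (hdStep tA tB x y (adv 0)).2 x y

/-- The current round is classical: exactly one of the players sends. -/
def ClassicalRound {X Y O : Type} (tA : HDTree X O) (tB : HDTree Y O) (x : X) (y : Y) : Prop :=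
  match tA, tB with
  | HDTree.node actA _, HDTree.node actB _ => (actA x).isSome ≠ (actB y).isSome
  | _, _ => True

/-- All rounds of the `d`-round execution on `(x, y)` against `adv` are classical. -/
def AllClassical {X Y O : Type} :
    ℕ → (ℕ → Bool × Bool) → HDTree X O → HDTree Y O → X → Y → Prop
  | 0, _, _, _, _, _ => True
  | d + 1, adv, tA, tB, x, y =>
      ClassicalRound tA tB x y ∧
        AllClassical d (fun i => adv (i + 1)) (hdStep tA tB x y (adv 0)).1
          (hdStep tA tB x y (adv 0)).2 x y

/-- A half-duplex protocol of depth `d`: a pair of full 4-ary trees of depth `d`. -/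
structure HDProt (X Y O : Type) (d : ℕ) where
  alice : HDTree X O
  bob : HDTree Y O
  fullA : alice.IsFull d
  fullB : bob.IsFull d

namespace HDProt

variable {X Y O : Type} {d : ℕ}

/-- The protocol solves the relation `R`: in every execution against every adversary,
both players reach leaves labeled with a common output that is valid for the inputs. -/
def Solves (P : HDProt X Y O d) (R : X → Y → O → Prop) : Prop :=
  ∀ x y adv, ∃ o : O,
    (hdRun d adv P.alice P.bob x y).1 = HDTree.leaf o ∧
    (hdRun d adv P.alice P.bob x y).2 = HDTree.leaf o ∧ R x y o

/-- The protocol is partially half-duplex with respect to the function parts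
`gA`, `gB` of the inputs: when `gA x = gB y`, all rounds are classical. -/
def PartiallyHD {G : Type} (P : HDProt X Y O d) (gA : X → G) (gB : Y → G) : Prop :=
  ∀ x y adv, gA x = gB y → AllClassical d adv P.alice P.bob x y

/-- `tr` is a (possibly partial) transcript of `P`. -/
def IsTranscript (P : HDProt X Y O d) (tr : List Bool) : Prop :=
  (∃ x, P.alice.Cons tr x) ∧ (∃ y, P.bob.Cons tr y)

end HDProt

/-- Partially half-duplex communication complexity of a relation whose inputs carry
function parts `gA`, `gB`. -/
noncomputable def Cphd {X Y O G : Type} (R : X → Y → O → Prop)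
    (gA : X → G) (gB : Y → G) : ℕ :=
  sInf {d | ∃ P : HDProt X Y O d, P.Solves R ∧ P.PartiallyHD gA gB}

/-! ### Transcript sets for multiplexor protocols (half-duplex version) -/

section MuxSetsHD

variable {m n : ℕ} {f : BFunc m} {O : Type} {d : ℕ}

/-- `X_π(g)`: the matrices `X` such that Alice's input `(g, X)` is consistent with `tr`. -/
def XpiHD (P : HDProt (AliceMux m n f) (BobMux m n f) O d) (tr : List Bool)
    (g : BFunc n) : Set (BMat m n) :=
  {X | ∃ h : compFG f g X = true, P.alice.Cons tr ⟨(g, X), h⟩}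

/-- `Y_π(g)`: the matrices `Y` such that Bob's input `(g, Y)` is consistent with `tr`. -/
def YpiHD (P : HDProt (AliceMux m n f) (BobMux m n f) O d) (tr : List Bool)
    (g : BFunc n) : Set (BMat m n) :=
  {Y | ∃ h : compFG f g Y = false, P.bob.Cons tr ⟨(g, Y), h⟩}

/-- `A_π(g)`: the strings `a ∈ f⁻¹(1)` with `X_π(g, a) ≠ ∅`. -/
def ApiHD (P : HDProt (AliceMux m n f) (BobMux m n f) O d) (tr : List Bool)
    (g : BFunc n) : Set (Fin m → Bool) :=
  {a | f a = true ∧ (XpiHD P tr g ∩ ginv g a).Nonempty}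

/-- `B_π(g)`: the strings `b ∈ f⁻¹(0)` with `Y_π(g, b) ≠ ∅`. -/
def BpiHD (P : HDProt (AliceMux m n f) (BobMux m n f) O d) (tr : List Bool)
    (g : BFunc n) : Set (Fin m → Bool) :=
  {b | f b = false ∧ (YpiHD P tr g ∩ ginv g b).Nonempty}

/-- `V_π` (version via nonempty `X_π(g)` and `Y_π(g)`). -/
def VpiHD (P : HDProt (AliceMux m n f) (BobMux m n f) O d) (tr : List Bool) :
    Set (BFunc n) :=
  {g | (XpiHD P tr g).Nonempty ∧ (YpiHD P tr g).Nonempty}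

/-- `V_π` (version via nonempty `A_π(g)` and `B_π(g)`). -/
def VpiABHD (P : HDProt (AliceMux m n f) (BobMux m n f) O d) (tr : List Bool) :
    Set (BFunc n) :=
  {g | (ApiHD P tr g).Nonempty ∧ (BpiHD P tr g).Nonempty}

/-- A transcript `tr` of `P` is `γ`-alive (with the universal constant `κ = 8`). -/
def AliveHD (γ : ℝ) (P : HDProt (AliceMux m n f) (BobMux m n f) O d)
    (tr : List Bool) : Prop :=
  P.IsTranscript tr ∧
  ∃ V : Set (BFunc n), V ⊆ VpiABHD P tr ∧ (∀ g ∈ V, IsBalanced g) ∧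
    ((2 : ℝ) ^ (-(m : ℝ)) * ((BalancedFuncs n).ncard : ℝ) ≤ (V.ncard : ℝ)) ∧
    (∀ g ∈ V,
      (1 - γ) * m + 8 * Real.logb 2 m + 8 ≤
        Real.logb 2 (Lrect (ApiHD P tr g) (BpiHD P tr g))) ∧
    (∀ g ∈ V, ∀ a ∈ ApiHD P tr g,
      (2 : ℝ) ^ (-γ * m + 1) * ((ginv g a).ncard : ℝ) ≤
        ((XpiHD P tr g ∩ ginv g a).ncard : ℝ)) ∧
    (∀ g ∈ V, ∀ b ∈ BpiHD P tr g,
      (2 : ℝ) ^ (-γ * m + 1) * ((ginv g b).ncard : ℝ) ≤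
        ((YpiHD P tr g ∩ ginv g b).ncard : ℝ))

/-- The weak intersection property for two functions `gA`, `gB`. -/
def WeakIntersectHD (P : HDProt (AliceMux m n f) (BobMux m n f) O d) (tr : List Bool)
    (gA gB : BFunc n) : Prop :=
  ∃ X ∈ XpiHD P tr gA, ∃ Y ∈ YpiHD P tr gB,
    ∀ i : Fin m, gA (X i) ≠ gB (Y i) → X i = Y i

/-- The characteristic graph of `tr` for `KW_f ⋄ MUX_n`, on vertex set `V`. -/
def charGraphDiamHD (P : HDProt (AliceMux m n f) (BobMux m n f) O d) (tr : List Bool)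
    (V : Set (BFunc n)) : SimpleGraph ↥V where
  Adj gA gB := gA ≠ gB ∧
    ((XpiHD P tr ↑gA ∩ YpiHD P tr ↑gB).Nonempty ∨
      (XpiHD P tr ↑gB ∩ YpiHD P tr ↑gA).Nonempty)
  symm := by
    refine ⟨?_⟩
    rintro a b ⟨hne, h⟩
    exact ⟨hne.symm, h.symm⟩
  loopless := by
    refine ⟨?_⟩
    rintro a ⟨hne, -⟩
    exact hne rfl

/-- The characteristic graph of `tr` for `KW_f ⊛ MUX_n`, on vertex set `V`. -/
def charGraphStrongHD (P : HDProt (AliceMux m n f) (BobMux m n f) O d) (tr : List Bool)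
    (V : Set (BFunc n)) : SimpleGraph ↥V where
  Adj gA gB := gA ≠ gB ∧
    (WeakIntersectHD P tr ↑gA ↑gB ∨ WeakIntersectHD P tr ↑gB ↑gA)
  symm := by
    refine ⟨?_⟩
    rintro a b ⟨hne, h⟩
    exact ⟨hne.symm, h.symm⟩
  loopless := by
    refine ⟨?_⟩
    rintro a ⟨hne, -⟩
    exact hne rfl

end MuxSetsHD

/-! ### Transcript sets for multiplexor protocols (standard deterministic version) -/

section MuxSetsP

variable {m n : ℕ} {f : BFunc m} {O : Type}

/-- `X_π(g)` for a standard deterministic protocol. -/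
def XpiP (p : Prot (AliceMux m n f) (BobMux m n f) O) (tr : List Bool)
    (g : BFunc n) : Set (BMat m n) :=
  {X | ∃ h : compFG f g X = true, Prot.ConsA p tr ⟨(g, X), h⟩}

/-- `Y_π(g)` for a standard deterministic protocol. -/
def YpiP (p : Prot (AliceMux m n f) (BobMux m n f) O) (tr : List Bool)
    (g : BFunc n) : Set (BMat m n) :=
  {Y | ∃ h : compFG f g Y = false, Prot.ConsB p tr ⟨(g, Y), h⟩}

/-- `A_π(g)` for a standard deterministic protocol. -/
def ApiP (p : Prot (AliceMux m n f) (BobMux m n f) O) (tr : List Bool)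
    (g : BFunc n) : Set (Fin m → Bool) :=
  {a | f a = true ∧ (XpiP p tr g ∩ ginv g a).Nonempty}

/-- `B_π(g)` for a standard deterministic protocol. -/
def BpiP (p : Prot (AliceMux m n f) (BobMux m n f) O) (tr : List Bool)
    (g : BFunc n) : Set (Fin m → Bool) :=
  {b | f b = false ∧ (YpiP p tr g ∩ ginv g b).Nonempty}

/-- `V_π` (version via nonempty `X_π(g)` and `Y_π(g)`), standard protocols. -/
def VpiPset (p : Prot (AliceMux m n f) (BobMux m n f) O) (tr : List Bool) :
    Set (BFunc n) :=
  {g | (XpiP p tr g).Nonempty ∧ (YpiP p tr g).Nonempty}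

/-- `V_π` (version via nonempty `A_π(g)` and `B_π(g)`), standard protocols. -/
def VpiABP (p : Prot (AliceMux m n f) (BobMux m n f) O) (tr : List Bool) :
    Set (BFunc n) :=
  {g | (ApiP p tr g).Nonempty ∧ (BpiP p tr g).Nonempty}

/-- `γ`-alive transcripts (with `κ = 8`), standard protocols. -/
def AliveP (γ : ℝ) (p : Prot (AliceMux m n f) (BobMux m n f) O)
    (tr : List Bool) : Prop :=
  p.IsTranscript tr ∧
  ∃ V : Set (BFunc n), V ⊆ VpiABP p tr ∧ (∀ g ∈ V, IsBalanced g) ∧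
    ((2 : ℝ) ^ (-(m : ℝ)) * ((BalancedFuncs n).ncard : ℝ) ≤ (V.ncard : ℝ)) ∧
    (∀ g ∈ V,
      (1 - γ) * m + 8 * Real.logb 2 m + 8 ≤
        Real.logb 2 (Lrect (ApiP p tr g) (BpiP p tr g))) ∧
    (∀ g ∈ V, ∀ a ∈ ApiP p tr g,
      (2 : ℝ) ^ (-γ * m + 1) * ((ginv g a).ncard : ℝ) ≤
        ((XpiP p tr g ∩ ginv g a).ncard : ℝ)) ∧
    (∀ g ∈ V, ∀ b ∈ BpiP p tr g,
      (2 : ℝ) ^ (-γ * m + 1) * ((ginv g b).ncard : ℝ) ≤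
        ((YpiP p tr g ∩ ginv g b).ncard : ℝ))

/-- The weak intersection property, standard protocols. -/
def WeakIntersectP (p : Prot (AliceMux m n f) (BobMux m n f) O) (tr : List Bool)
    (gA gB : BFunc n) : Prop :=
  ∃ X ∈ XpiP p tr gA, ∃ Y ∈ YpiP p tr gB,
    ∀ i : Fin m, gA (X i) ≠ gB (Y i) → X i = Y i

/-- The characteristic graph for `KW_f ⋄ MUX_n`, standard protocols. -/
def charGraphDiamP (p : Prot (AliceMux m n f) (BobMux m n f) O) (tr : List Bool)
    (V : Set (BFunc n)) : SimpleGraph ↥V where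
  Adj gA gB := gA ≠ gB ∧
    ((XpiP p tr ↑gA ∩ YpiP p tr ↑gB).Nonempty ∨
      (XpiP p tr ↑gB ∩ YpiP p tr ↑gA).Nonempty)
  symm := by
    refine ⟨?_⟩
    rintro a b ⟨hne, h⟩
    exact ⟨hne.symm, h.symm⟩
  loopless := by
    refine ⟨?_⟩
    rintro a ⟨hne, -⟩
    exact hne rfl

/-- The characteristic graph for `KW_f ⊛ MUX_n`, standard protocols. -/
def charGraphStrongP (p : Prot (AliceMux m n f) (BobMux m n f) O) (tr : List Bool)
    (V : Set (BFunc n)) : SimpleGraph ↥V where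
  Adj gA gB := gA ≠ gB ∧
    (WeakIntersectP p tr ↑gA ↑gB ∨ WeakIntersectP p tr ↑gB ↑gA)
  symm := by
    refine ⟨?_⟩
    rintro a b ⟨hne, h⟩
    exact ⟨hne.symm, h.symm⟩
  loopless := by
    refine ⟨?_⟩
    rintro a ⟨hne, -⟩
    exact hne rfl

end MuxSetsP

/-! ### Prefix-thick sets, branching structures and winning sets -/

/-- A set of strings indexed by a linearly ordered set `I` is prefix thick with
degree `t`: it has a nonempty subset whose prefix tree has minimum degree
greater than `t` (the children of the depth-`i` vertex given by the prefix of
`x ∈ S'` are the possible values of the next coordinate among elements of `S'`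
agreeing with `x` on all earlier coordinates). -/
def RowThick {I A : Type} [LT I] (S : Set (I → A)) (t : ℝ) : Prop :=
  ∃ S' : Set (I → A), S' ⊆ S ∧ S'.Nonempty ∧ ∀ x ∈ S', ∀ i : I,
    t < (({a : A | ∃ y ∈ S', (∀ j, j < i → y j = x j) ∧ y i = a}).ncard : ℝ)

/-- Prefix thickness for strings over (possibly different) alphabets `A i`,
with a separate degree bound `t i` at each depth. -/
def DepThick {m : ℕ} {A : Fin m → Type} (S : Set (∀ i, A i)) (t : Fin m → ℝ) : Prop :=
  ∃ S' : Set (∀ i, A i), S' ⊆ S ∧ S'.Nonempty ∧ ∀ x ∈ S', ∀ i : Fin m,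
    t i < (({a : A i | ∃ y ∈ S', (∀ j, j < i → y j = x j) ∧ y i = a}).ncard : ℝ)

/-- The restriction of a set of matrices to the rows in `I` (ordered as in `[m]`). -/
def restrictRows {m n : ℕ} (I : Finset (Fin m)) (S : Set (BMat m n)) :
    Set (↥I → (Fin n → Bool)) :=
  (fun X => fun i : ↥I => X i.1) '' S

/-- The restriction of a set of strings to the coordinates in `I` (ordered as in `[m]`). -/
def restrictStr {m : ℕ} {A : Type} (I : Finset (Fin m)) (S : Set (Fin m → A)) :
    Set (↥I → A) :=
  (fun x => fun i : ↥I => x i.1) '' S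

/-- `w` is a branching structure of `S`: some nonempty subset `S' ⊆ S` has a prefix
tree in which every vertex at depth `i` has exactly `w i` children. -/
def IsBranching {m : ℕ} {A : Type} (S : Set (Fin m → A)) (w : Fin m → ℕ) : Prop :=
  ∃ S' : Set (Fin m → A), S' ⊆ S ∧ S'.Nonempty ∧ ∀ x ∈ S', ∀ i : Fin m,
    ({a : A | ∃ y ∈ S', (∀ j, j < i → y j = x j) ∧ y i = a}).ncard = w i

/-- The winning set of `S`: the set of its branching structures. -/
def WinSet {m : ℕ} {A : Type} (S : Set (Fin m → A)) : Set (Fin m → ℕ) :=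
  {w | IsBranching S w}

/-! ### Non-deterministic communication complexity -/

/-- There is a non-deterministic protocol for the total function `f` with
witness set of size `k`. -/
def NDProtFor {X Y : Type} (f : X × Y → Bool) (k : ℕ) : Prop :=
  ∃ a : X → Fin k → Bool, ∃ b : Y → Fin k → Bool,
    ∀ x y, f (x, y) = true ↔ ∃ w, a x w = true ∧ b y w = true

/-- The minimal size of a (nonempty) witness set of a non-deterministic protocol for `f`;
the non-deterministic communication complexity `NCC(f)` is its base-2 logarithm. -/
noncomputable def NCCcard {X Y : Type} (f : X × Y → Bool) : ℕ :=
  sInf {k | 1 ≤ k ∧ NDProtFor f k}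

/-- A non-deterministic protocol for the partial problem `GraphIneq_G` with witness
set of size `k`: adjacent pairs are accepted, equal pairs are rejected. -/
def GraphIneqProt {V : Type} (G : SimpleGraph V) (k : ℕ) : Prop :=
  ∃ a : V → Fin k → Bool, ∃ b : V → Fin k → Bool,
    (∀ u v, G.Adj u v → ∃ w, a u w = true ∧ b v w = true) ∧
    (∀ v, ¬ ∃ w, a v w = true ∧ b v w = true)

/-- The minimal witness-set size of a non-deterministic protocol for `GraphIneq_G`;
`NCC(GraphIneq_G)` is its base-2 logarithm. -/
noncomputable def NCCgraphIneqCard {V : Type} (G : SimpleGraph V) : ℕ :=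
  sInf {k | 1 ≤ k ∧ GraphIneqProt G k}

/-- `S` is an independent set of `G`. -/
def IndepIn {V : Type} (G : SimpleGraph V) (S : Set V) : Prop :=
  ∀ u ∈ S, ∀ v ∈ S, ¬ G.Adj u v

/-! Induction on `m`, splitting strings by their first letter. Write `X_a` for the strings `y`
with `a :: y ∈ X`. Then `k :: w` is a branching structure of `X` iff
`1 ≤ k ≤ N(w) := #{a | w ∈ W(X_a)}`: a witness for `k :: w` restricts to witnesses for `w` on the
slices of its `k` first letters, and witnesses for `w` on any `k` slices glue together.
Hence `|W(X)| = ∑_w N(w) = ∑_a |W(X_a)| = ∑_a |X_a| = |X|`, the second equality counting the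
pairs `(a, w)` with `w ∈ W(X_a)` in two ways. -/

theorem Set.ncard_eq_sum_ncard_fiber {α γ : Type*} {s : Set α} (hs : s.Finite) (f : α → γ)
    {U : Finset γ} (hU : ∀ x ∈ s, f x ∈ U) : s.ncard = ∑ c ∈ U, {x ∈ s | f x = c}.ncard := by
  classical
  rw [ncard_eq_toFinset_card s hs,
    Finset.card_eq_sum_card_fiberwise fun x hx => hU x (hs.mem_toFinset.mp hx)]
  refine Finset.sum_congr rfl fun c _ => ?_
  rw [← ncard_coe_finset, Finset.coe_filter]
  simp

theorem Set.ncard_eq_of_ncard_fiber_eq {α β γ : Type*} {s : Set α} {t : Set β}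
    (f : α → γ) (g : β → γ) (hs : s.Finite) (ht : t.Finite)
    (h : ∀ c, {x ∈ s | f x = c}.ncard = {y ∈ t | g y = c}.ncard) :
    s.ncard = t.ncard := by
  classical
  set U := hs.toFinset.image f ∪ ht.toFinset.image g
  rw [ncard_eq_sum_ncard_fiber hs f (U := U) fun x hx =>
      Finset.mem_union_left _ (Finset.mem_image_of_mem f (hs.mem_toFinset.2 hx)),
    ncard_eq_sum_ncard_fiber ht g (U := U) fun y hy =>
      Finset.mem_union_right _ (Finset.mem_image_of_mem g (ht.mem_toFinset.2 hy))]
  exact Finset.sum_congr rfl fun c _ => h c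

theorem Set.ncard_sep_fst_eq {α β : Type*} (s : Set (α × β)) (a : α) :
    {p ∈ s | p.1 = a}.ncard = {b | (a, b) ∈ s}.ncard := by
  rw [← ncard_image_of_injective {b | (a, b) ∈ s} (Prod.mk_right_injective a)]
  congr 1
  ext ⟨a', b⟩
  constructor
  · rintro ⟨h, rfl⟩
    exact ⟨b, h, rfl⟩
  · rintro ⟨b, h, ⟨⟩⟩
    exact ⟨h, rfl⟩

theorem Set.ncard_sep_snd_eq {α β : Type*} (s : Set (α × β)) (b : β) :
    {p ∈ s | p.2 = b}.ncard = {a | (a, b) ∈ s}.ncard := by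
  rw [← ncard_image_of_injective {a | (a, b) ∈ s} (Prod.mk_left_injective b)]
  congr 1
  ext ⟨a, b'⟩
  constructor
  · rintro ⟨h, rfl⟩
    exact ⟨a, h, rfl⟩
  · rintro ⟨a, h, ⟨⟩⟩
    exact ⟨h, rfl⟩

theorem Set.ncard_setOf_cons_mem {m : ℕ} {α : Type*} (s : Set (Fin (m + 1) → α)) :
    {p : α × (Fin m → α) | Fin.cons p.1 p.2 ∈ s}.ncard = s.ncard :=
  ncard_preimage_of_injective_subset_range (Fin.consEquiv fun _ => α).injective
    fun x _ => (Fin.consEquiv fun _ => α).surjective x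

section BranchingStructures

variable {m : ℕ} {A : Type}

def prefixChildren (S : Set (Fin m → A)) (x : Fin m → A) (i : Fin m) : Set A :=
  {a | ∃ y ∈ S, (∀ j, j < i → y j = x j) ∧ y i = a}

def headSlice (X : Set (Fin (m + 1) → A)) (a : A) : Set (Fin m → A) :=
  {y | Fin.cons a y ∈ X}

def consGlue (T : Set A) (F : A → Set (Fin m → A)) : Set (Fin (m + 1) → A) :=
  {x | x 0 ∈ T ∧ Fin.tail x ∈ F (x 0)}

theorem isBranching_iff (S : Set (Fin m → A)) (w : Fin m → ℕ) :
    IsBranching S w ↔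
      ∃ S' ⊆ S, S'.Nonempty ∧ ∀ x ∈ S', ∀ i, (prefixChildren S' x i).ncard = w i :=
  Iff.rfl

theorem prefixChildren_zero (S : Set (Fin (m + 1) → A)) (x : Fin (m + 1) → A) :
    prefixChildren S x 0 = (· 0) '' S := by
  ext a
  simp [prefixChildren]

theorem prefixChildren_cons_succ (S : Set (Fin (m + 1) → A)) (a : A) (x : Fin m → A)
    (i : Fin m) :
    prefixChildren S (Fin.cons a x) i.succ = prefixChildren (headSlice S a) x i := by
  ext b
  constructor
  · rintro ⟨y, hy, hagree, rfl⟩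
    have hy0 : y 0 = a := by simpa using hagree 0 i.succ_pos
    refine ⟨Fin.tail y, ?_, fun j hj => hagree j.succ (Fin.succ_lt_succ_iff.2 hj), rfl⟩
    rwa [headSlice, Set.mem_ofPred_eq, ← hy0, Fin.cons_self_tail]
  · rintro ⟨z, hz, hagree, rfl⟩
    refine ⟨Fin.cons a z, hz, fun j hj => ?_, Fin.cons_succ _ _ _⟩
    cases j using Fin.cases with
    | zero => rfl
    | succ j => simpa using hagree j (Fin.succ_lt_succ_iff.1 hj)

theorem headSlice_mono {S X : Set (Fin (m + 1) → A)} (h : S ⊆ X) (a : A) :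
    headSlice S a ⊆ headSlice X a :=
  fun _ hy => h hy

theorem headSlice_consGlue {T : Set A} {F : A → Set (Fin m → A)} {a : A} (ha : a ∈ T) :
    headSlice (consGlue T F) a = F a := by
  ext y
  simp [headSlice, consGlue, ha]

theorem image_head_consGlue {T : Set A} {F : A → Set (Fin m → A)}
    (hF : ∀ a ∈ T, (F a).Nonempty) : (· 0) '' consGlue T F = T := by
  ext a
  constructor
  · rintro ⟨x, hx, rfl⟩
    exact hx.1
  · intro ha
    obtain ⟨y, hy⟩ := hF a ha
    exact ⟨Fin.cons a y, by simpa [consGlue, ha] using hy, rfl⟩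

theorem consGlue_subset {X : Set (Fin (m + 1) → A)} {T : Set A} {F : A → Set (Fin m → A)}
    (hF : ∀ a ∈ T, F a ⊆ headSlice X a) : consGlue T F ⊆ X := by
  rintro x ⟨hx0, hxt⟩
  simpa [headSlice] using hF _ hx0 hxt

theorem isBranching_cons_iff (X : Set (Fin (m + 1) → A)) (k : ℕ) (w : Fin m → ℕ) :
    IsBranching X (Fin.cons k w) ↔
      ∃ T : Set A, T.Nonempty ∧ T.ncard = k ∧ ∀ a ∈ T, IsBranching (headSlice X a) w := by
  rw [isBranching_iff]
  constructor
  · rintro ⟨S, hSX, ⟨x₀, hx₀⟩, hS⟩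
    refine ⟨(· 0) '' S, ⟨x₀ 0, x₀, hx₀, rfl⟩, ?_, ?_⟩
    · simpa [prefixChildren_zero] using hS x₀ hx₀ 0
    · rintro _ ⟨y, hy, rfl⟩
      refine ⟨headSlice S (y 0), headSlice_mono hSX _, ⟨Fin.tail y, ?_⟩, fun x hx i => ?_⟩
      · simpa [headSlice] using hy
      · have hchildren := hS _ hx i.succ
        rwa [prefixChildren_cons_succ, Fin.cons_succ] at hchildren
  · rintro ⟨T, ⟨a₀, ha₀⟩, hTk, hT⟩
    simp only [isBranching_iff] at hT
    choose! F hFX hFne hF using hT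
    obtain ⟨y₀, hy₀⟩ := hFne a₀ ha₀
    refine ⟨consGlue T F, consGlue_subset hFX, ⟨Fin.cons a₀ y₀, by simpa [consGlue, ha₀]⟩,
      fun x hx i => ?_⟩
    cases i using Fin.cases with
    | zero => rw [prefixChildren_zero, image_head_consGlue hFne, Fin.cons_zero, hTk]
    | succ i =>
      rw [← Fin.cons_self_tail x, prefixChildren_cons_succ, headSlice_consGlue hx.1,
        Fin.cons_succ]
      exact hF _ hx.1 _ hx.2 i

theorem winSet_fin_zero (X : Set (Fin 0 → A)) : WinSet X = {_w | X.Nonempty} := by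
  ext w
  simp only [WinSet, isBranching_iff, IsEmpty.forall_iff, implies_true, and_true,
    Set.mem_ofPred_eq]
  exact ⟨fun ⟨S, hSX, hS⟩ => hS.mono hSX, fun hX => ⟨X, subset_rfl, hX⟩⟩

variable [Finite A]

theorem mem_winSet_cons_iff (X : Set (Fin (m + 1) → A)) (k : ℕ) (w : Fin m → ℕ) :
    Fin.cons k w ∈ WinSet X ↔ k ∈ Set.Icc 1 {a | w ∈ WinSet (headSlice X a)}.ncard := by
  refine (isBranching_cons_iff X k w).trans ⟨?_, ?_⟩
  · rintro ⟨T, hT, rfl, hTw⟩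
    exact ⟨(Set.ncard_pos T.toFinite).2 hT, Set.ncard_le_ncard hTw (Set.toFinite _)⟩
  · rintro ⟨hk, hkN⟩
    obtain ⟨T, hTw, rfl⟩ := Set.exists_subset_card_eq hkN
    exact ⟨T, Set.nonempty_of_ncard_ne_zero (by omega), rfl, hTw⟩

theorem winSet_finite (X : Set (Fin m → A)) : (WinSet X).Finite := by
  refine (Set.Finite.pi' fun _ => Set.finite_Iic (Nat.card A)).subset ?_
  rintro w ⟨S, -, ⟨x, hx⟩, hS⟩ i
  rw [← hS x hx i]
  exact Set.ncard_le_card _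

def winSetPairs (X : Set (Fin (m + 1) → A)) : Set (A × (Fin m → ℕ)) :=
  {p | p.2 ∈ WinSet (headSlice X p.1)}

theorem winSetPairs_finite (X : Set (Fin (m + 1) → A)) : (winSetPairs X).Finite := by
  refine (Set.finite_univ.prod (Set.finite_iUnion fun a => winSet_finite (headSlice X a))).subset
    ?_
  rintro ⟨a, w⟩ hw
  exact ⟨trivial, Set.mem_iUnion.2 ⟨a, hw⟩⟩

theorem ncard_winSet_eq_ncard_winSetPairs (X : Set (Fin (m + 1) → A)) :
    (WinSet X).ncard = (winSetPairs X).ncard := by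
  rw [← Set.ncard_setOf_cons_mem]
  refine Set.ncard_eq_of_ncard_fiber_eq Prod.snd Prod.snd ?_ (winSetPairs_finite X) fun w => ?_
  · exact (winSet_finite X).preimage (Fin.consEquiv fun _ => ℕ).injective.injOn
  · rw [Set.ncard_sep_snd_eq, Set.ncard_sep_snd_eq]
    simp only [Set.mem_ofPred_eq, mem_winSet_cons_iff, Set.ofPred_mem_eq, Set.ncard_Icc_nat,
      Nat.add_sub_cancel]
    rfl

end BranchingStructures

theorem statement11 {m : ℕ} {A : Type} [Fintype A] (X : Set (Fin m → A)) :
    (WinSet X).ncard = X.ncard := by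
  induction m with
  | zero =>
    obtain rfl | hX := X.eq_empty_or_nonempty
    · simp [winSet_fin_zero]
    · simp [winSet_fin_zero, hX.eq_univ]
  | succ m ih =>
    calc (WinSet X).ncard
        = (winSetPairs X).ncard := ncard_winSet_eq_ncard_winSetPairs X
      _ = {p : A × (Fin m → A) | Fin.cons p.1 p.2 ∈ X}.ncard := by
          refine Set.ncard_eq_of_ncard_fiber_eq Prod.fst Prod.fst (winSetPairs_finite X)
            (Set.toFinite _) fun a => ?_
          rw [Set.ncard_sep_fst_eq, Set.ncard_sep_fst_eq]
          exact ih (headSlice X a)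
      _ = X.ncard := Set.ncard_setOf_cons_mem X
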